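/- Let 𝒳, 𝒮, 𝒴 be finite sets, P_S a pmf on 𝒮 with P_S(s) > 0 for all s, P_{Y|XS} a channel with strictly positive entries, c : 𝒳 → ℝ≥0 a cost function and μ ≥ 0. For a pmf P_X on 𝒳 with strictly positive entries, let Q*_{X|YS}(x|y,s) := P_X(x) P_{Y|XS}(y|x,s) / Σ_{x'} P_X(x') P_{Y|XS}(y|x',s). Then J_μ(P_X, Q*_{X|YS}) = I(X;Y|S) − μ Σ_x P_X(x) c(x), where I(X;Y|S) = Σ_{x,s,y} P_S(s) P_X(x) P_{Y|XS}(y|x,s) log( P_{Y|XS}(y|x,s) / Σ_{x'} P_X(x') P_{Y|XS}(y|x',s) ). Consequently, the supremum of J_μ(P_X, Q_{X|YS}) over all conditional pmfs Q_{X|YS} equals I(X;Y|S) − μ Σ_x P_X(x) c(x). -/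
import Mathlib


open Finset
open scoped Classical

/-- The Blahut–Arimoto-type objective
`J_μ(P_X, Q) = Σ_{x,s,y} P_X(x) P_S(s) W(y|x,s) log (Q(x|y,s)/P_X(x)) − μ Σ_x P_X(x) c(x)`,
valued in `EReal` so that a term with `Q(x|y,s) = 0` (and positive weight)
contributes `−∞`. -/
noncomputable def Jmu {𝒳 𝒮 𝒴 : Type} [Fintype 𝒳] [Fintype 𝒮] [Fintype 𝒴]
    (PS : 𝒮 → ℝ) (W : 𝒳 → 𝒮 → 𝒴 → ℝ) (c : 𝒳 → ℝ) (μ : ℝ)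
    (P : 𝒳 → ℝ) (Q : 𝒴 → 𝒮 → 𝒳 → ℝ) : EReal :=
  (∑ x, ∑ s, ∑ y,
      (if Q y s x = 0 then (⊥ : EReal)
       else ((P x * PS s * W x s y * Real.log (Q y s x / P x) : ℝ) : EReal)))
    - ((μ * ∑ x, P x * c x : ℝ) : EReal)

private def realToERealHom : ℝ →+ EReal where
  toFun := Real.toEReal
  map_zero' := rfl
  map_add' := EReal.coe_add

private lemma ereal_coe_sum {α : Type*} (s : Finset α) (f : α → ℝ) :
    ((∑ a ∈ s, f a : ℝ) : EReal) = ∑ a ∈ s, ((f a : ℝ) : EReal) :=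
  map_sum realToERealHom f s

private lemma ereal_sum_eq_bot {α : Type*} {s : Finset α} {f : α → EReal} {i : α}
    (hi : i ∈ s) (h : f i = ⊥) : ∑ a ∈ s, f a = ⊥ := by
  rw [← Finset.add_sum_erase s f hi, h, EReal.bot_add]

/-- **Blahut–Arimoto steps (a)+(b): value of the inner maximization.**
For the backward channel `Q*`, `J_μ(P, Q*) = I(X;Y|S) − μ Σ_x P(x) c(x)` and
consequently `sup_Q J_μ(P, Q)` equals this same value. -/
theorem stmt_8
    {𝒳 𝒮 𝒴 : Type} [Fintype 𝒳] [Fintype 𝒮] [Fintype 𝒴]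
    (PS : 𝒮 → ℝ) (hPS : ∀ s, 0 < PS s) (hPS1 : ∑ s, PS s = 1)
    (W : 𝒳 → 𝒮 → 𝒴 → ℝ) (hW : ∀ x s y, 0 < W x s y)
    (hW1 : ∀ x s, ∑ y, W x s y = 1)
    (c : 𝒳 → ℝ) (hc : ∀ x, 0 ≤ c x) (μ : ℝ) (hμ : 0 ≤ μ)
    (P : 𝒳 → ℝ) (hP : ∀ x, 0 < P x) (hP1 : ∑ x, P x = 1) :
    Jmu PS W c μ P (fun y s x => P x * W x s y / ∑ x', P x' * W x' s y) =
      (((∑ x, ∑ s, ∑ y, PS s * P x * W x s y *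
          Real.log (W x s y / ∑ x', P x' * W x' s y))
        - μ * ∑ x, P x * c x : ℝ) : EReal)
    ∧ sSup { r : EReal | ∃ Q : 𝒴 → 𝒮 → 𝒳 → ℝ,
        (∀ y s x, 0 ≤ Q y s x) ∧ (∀ y s, ∑ x, Q y s x = 1) ∧
        r = Jmu PS W c μ P Q } =
      (((∑ x, ∑ s, ∑ y, PS s * P x * W x s y *
          Real.log (W x s y / ∑ x', P x' * W x' s y))
        - μ * ∑ x, P x * c x : ℝ) : EReal) := by
  have hne : (Finset.univ : Finset 𝒳).Nonempty := by
    rcases (Finset.univ : Finset 𝒳).eq_empty_or_nonempty with h | h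
    · rw [h] at hP1; simp at hP1
    · exact h
  set m : 𝒮 → 𝒴 → ℝ := fun s y => ∑ x', P x' * W x' s y with hm
  have hmpos : ∀ s y, 0 < m s y := fun s y =>
    Finset.sum_pos (fun x _ => mul_pos (hP x) (hW x s y)) hne
  -- the candidate Q*
  set Qs : 𝒴 → 𝒮 → 𝒳 → ℝ := fun y s x => P x * W x s y / m s y with hQs
  have hQspos : ∀ y s x, 0 < Qs y s x := fun y s x =>
    div_pos (mul_pos (hP x) (hW x s y)) (hmpos s y)
  have hQs1 : ∀ y s, ∑ x, Qs y s x = 1 := by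
    intro y s
    simp only [hQs]
    rw [← Finset.sum_div, div_eq_one_iff_eq (hmpos s y).ne']
  -- Part 1 : value at Q*
  have part1 : Jmu PS W c μ P Qs =
      (((∑ x, ∑ s, ∑ y, PS s * P x * W x s y *
          Real.log (W x s y / m s y)) - μ * ∑ x, P x * c x : ℝ) : EReal) := by
    unfold Jmu
    rw [EReal.coe_sub]
    congr 1
    rw [ereal_coe_sum]
    refine Finset.sum_congr rfl fun x _ => ?_
    rw [ereal_coe_sum]
    refine Finset.sum_congr rfl fun s _ => ?_
    rw [ereal_coe_sum]
    refine Finset.sum_congr rfl fun y _ => ?_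
    rw [if_neg (hQspos y s x).ne']
    norm_cast
    have hdiv : Qs y s x / P x = W x s y / m s y := by
      simp only [hQs]
      rw [div_right_comm, mul_div_cancel_left₀ _ (hP x).ne']
    rw [hdiv]; ring
  -- Part 2 : upper bound for any admissible Q
  have upper : ∀ Q : 𝒴 → 𝒮 → 𝒳 → ℝ, (∀ y s x, 0 ≤ Q y s x) → (∀ y s, ∑ x, Q y s x = 1) →
      Jmu PS W c μ P Q ≤
      (((∑ x, ∑ s, ∑ y, PS s * P x * W x s y *
          Real.log (W x s y / m s y)) - μ * ∑ x, P x * c x : ℝ) : EReal) := by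
    intro Q hQ0 hQ1
    by_cases hz : ∃ x s y, Q y s x = 0
    · obtain ⟨x, s, y, hxy⟩ := hz
      unfold Jmu
      have hb : (∑ x, ∑ s, ∑ y,
          (if Q y s x = 0 then (⊥ : EReal)
           else ((P x * PS s * W x s y * Real.log (Q y s x / P x) : ℝ) : EReal))) = ⊥ := by
        refine ereal_sum_eq_bot (Finset.mem_univ x) ?_
        refine ereal_sum_eq_bot (Finset.mem_univ s) ?_
        refine ereal_sum_eq_bot (Finset.mem_univ y) ?_
        rw [if_pos hxy]
      rw [hb, EReal.bot_sub]
      exact bot_le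
    · push_neg at hz
      have hQpos : ∀ y s x, 0 < Q y s x := fun y s x =>
        lt_of_le_of_ne (hQ0 y s x) (Ne.symm (hz x s y))
      unfold Jmu
      rw [EReal.coe_sub]
      have hsum : (∑ x, ∑ s, ∑ y,
          (if Q y s x = 0 then (⊥ : EReal)
           else ((P x * PS s * W x s y * Real.log (Q y s x / P x) : ℝ) : EReal)))
          = ((∑ x, ∑ s, ∑ y, P x * PS s * W x s y * Real.log (Q y s x / P x) : ℝ) : EReal) := by
        rw [ereal_coe_sum]
        refine Finset.sum_congr rfl fun x _ => ?_
        rw [ereal_coe_sum]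
        refine Finset.sum_congr rfl fun s _ => ?_
        rw [ereal_coe_sum]
        refine Finset.sum_congr rfl fun y _ => ?_
        rw [if_neg (hQpos y s x).ne']
      rw [hsum]
      have hreal : (∑ x, ∑ s, ∑ y, P x * PS s * W x s y * Real.log (Q y s x / P x))
          ≤ ∑ x, ∑ s, ∑ y, PS s * P x * W x s y * Real.log (W x s y / m s y) := by
        rw [Finset.sum_comm (γ := 𝒳) (α := 𝒮), Finset.sum_comm (γ := 𝒳) (α := 𝒮)]
        refine Finset.sum_le_sum fun s _ => ?_
        rw [Finset.sum_comm (γ := 𝒳) (α := 𝒴), Finset.sum_comm (γ := 𝒳) (α := 𝒴)]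
        refine Finset.sum_le_sum fun y _ => ?_
        -- for fixed s, y
        have key : ∀ x, P x * PS s * W x s y * Real.log (Q y s x / P x)
            ≤ PS s * P x * W x s y * Real.log (W x s y / m s y)
              + PS s * (Q y s x * m s y - P x * W x s y) := by
          intro x
          have hPx := hP x
          have hWx := hW x s y
          have hQx := hQpos y s x
          have hmy := hmpos s y
          have ht : 0 < Q y s x * m s y / (P x * W x s y) :=
            div_pos (mul_pos hQx hmy) (mul_pos hPx hWx)
          have hlog : Real.log (Q y s x / P x) - Real.log (W x s y / m s y)
              = Real.log (Q y s x * m s y / (P x * W x s y)) := by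
            rw [← Real.log_div (div_pos hQx hPx).ne' (div_pos hWx hmy).ne']
            congr 1
            field_simp
          have hle := Real.log_le_sub_one_of_pos ht
          have h1 : P x * W x s y * Real.log (Q y s x * m s y / (P x * W x s y))
              ≤ Q y s x * m s y - P x * W x s y := by
            have := mul_le_mul_of_nonneg_left hle (le_of_lt (mul_pos hPx hWx))
            calc P x * W x s y * Real.log (Q y s x * m s y / (P x * W x s y))
                ≤ P x * W x s y * (Q y s x * m s y / (P x * W x s y) - 1) := this
              _ = Q y s x * m s y - P x * W x s y := by
                  field_simp
          have h2 := mul_le_mul_of_nonneg_left h1 (le_of_lt (hPS s))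
          have hstep : P x * PS s * W x s y * Real.log (Q y s x / P x)
              = PS s * P x * W x s y * Real.log (W x s y / m s y)
                + PS s * (P x * W x s y *
                    Real.log (Q y s x * m s y / (P x * W x s y))) := by
            have : Real.log (Q y s x / P x) = Real.log (W x s y / m s y)
                + Real.log (Q y s x * m s y / (P x * W x s y)) := by linarith
            rw [this]; ring
          linarith
        calc ∑ x, P x * PS s * W x s y * Real.log (Q y s x / P x)
            ≤ ∑ x, (PS s * P x * W x s y * Real.log (W x s y / m s y)
              + PS s * (Q y s x * m s y - P x * W x s y)) :=
              Finset.sum_le_sum fun x _ => key x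
          _ = ∑ x, PS s * P x * W x s y * Real.log (W x s y / m s y)
              + PS s * ((∑ x, Q y s x) * m s y - m s y) := by
              rw [Finset.sum_add_distrib]
              congr 1
              rw [← Finset.mul_sum]
              congr 1
              rw [Finset.sum_sub_distrib, ← Finset.sum_mul]
          _ = ∑ x, PS s * P x * W x s y * Real.log (W x s y / m s y) := by
              rw [hQ1 y s, one_mul, sub_self, mul_zero, add_zero]
      exact EReal.sub_le_sub (EReal.coe_le_coe_iff.mpr hreal) le_rfl
  refine ⟨part1, ?_⟩
  apply le_antisymm
  · refine sSup_le ?_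
    rintro r ⟨Q, hQ0, hQ1, rfl⟩
    exact upper Q hQ0 hQ1
  · refine le_sSup ?_
    exact ⟨Qs, fun y s x => (hQspos y s x).le, hQs1, part1.symm⟩
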